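/- Let n ∈ ℕ, A = {0,...,n}, and let B ⊂ {0,...,n} be an arithmetic progression with diameter D = max B − min B > 0. Then the (|B|·D)⁻¹-covering number of [0,1] ∩ { a/b : a ∈ A − A, b ∈ (B − B) \ {0} } is at least c·|B|·D for an absolute constant c > 0. -/

import Mathlib

/-- The `ρ`-covering number of `X ⊂ ℝ`. -/
noncomputable def covN (ρ : ℝ) (X : Set ℝ) : ℕ :=
  sInf {k : ℕ | ∃ s : Finset ℝ, s.card = k ∧ X ⊆ ⋃ p ∈ s, Set.Icc p (p + ρ)}

/-!
After translating, `B = {b₀ + i g : i ≤ k}` and `D = k g`. For a reduced fraction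
`x / y ∈ (0, 1]` with `y ≤ k` and `0 ≤ m < g`, the point `(m + x / y) / g = (x + m y) / (y g)`
lies in the set: its numerator is at most `y g ≤ k g ≤ n` and its denominator `y g` is a
difference in `B`. Two distinct such points differ by at least `1 / (k² g) > (|B| D)⁻¹`, so no
covering interval contains two of them. At least `k² / 12` pairs in `{1, …, k}²` are coprime
(a common divisor `d ≥ 2` excludes at most `(k / d)²` pairs and `∑_{d ≥ 2} d⁻² < 1`), which
gives at least `k² g / 24` points.
-/

open Finset

section Covering

variable {ρ : ℝ} {X : Set ℝ}

lemma exists_finset_cover_Icc (hρ : 0 < ρ) (hX : Bornology.IsBounded X) :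
    ∃ s : Finset ℝ, X ⊆ ⋃ p ∈ s, Set.Icc p (p + ρ) := by
  obtain ⟨s, hs⟩ := hX.isCompact_closure.elim_finite_subcover (fun p : ℝ => Set.Ioo p (p + ρ))
    (fun _ => isOpen_Ioo) fun x _ =>
      Set.mem_iUnion.2 ⟨x - ρ / 2, by constructor <;> linarith⟩
  refine ⟨s, subset_closure.trans (hs.trans ?_)⟩
  exact Set.iUnion₂_mono fun _ _ => Set.Ioo_subset_Icc_self

lemma card_le_covN (hρ : 0 < ρ) (hX : Bornology.IsBounded X) {P : Finset ℝ} (hPX : ↑P ⊆ X)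
    (hP : ∀ q ∈ P, ∀ q' ∈ P, q ≠ q' → ρ < |q - q'|) : #P ≤ covN ρ X := by
  obtain ⟨s₀, hs₀⟩ := exists_finset_cover_Icc hρ hX
  refine le_csInf ⟨#s₀, s₀, rfl, hs₀⟩ ?_
  rintro _ ⟨s, rfl, hs⟩
  refine card_le_card_of_forall_subsingleton (fun q p => q ∈ Set.Icc p (p + ρ)) (fun q hq => ?_) ?_
  · obtain ⟨p, hp, hqp⟩ := Set.mem_iUnion₂.1 (hs (hPX hq))
    exact ⟨p, hp, hqp⟩
  · rintro p - q ⟨hq, ⟨hpq, hqp⟩⟩ q' ⟨hq', ⟨hpq', hqp'⟩⟩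
    by_contra hne
    rcases lt_abs.1 (hP q hq q' hq' hne) with h | h <;> linarith

end Covering

lemma card_not_coprime_pairs_le (k : ℕ) :
    #{p ∈ Ioc 0 k ×ˢ Ioc 0 k | ¬ p.1.Coprime p.2} ≤ ∑ d ∈ Icc 2 k, (k / d) ^ 2 := by
  classical
  calc #{p ∈ Ioc 0 k ×ˢ Ioc 0 k | ¬ p.1.Coprime p.2}
      ≤ #((Icc 2 k).biUnion fun d => {x ∈ Ioc 0 k | d ∣ x} ×ˢ {x ∈ Ioc 0 k | d ∣ x}) := by
        refine card_le_card fun p hp => ?_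
        simp only [mem_filter, mem_product, mem_Ioc] at hp
        obtain ⟨⟨⟨hx0, hxk⟩, hy0, hyk⟩, hcop⟩ := hp
        have hgcd : 2 ≤ Nat.gcd p.1 p.2 := by
          have := Nat.gcd_pos_of_pos_left p.2 hx0
          rw [Nat.Coprime] at hcop
          omega
        simp only [mem_biUnion, mem_Icc, mem_product, mem_filter, mem_Ioc]
        exact ⟨_, ⟨hgcd, (Nat.gcd_le_left _ hx0).trans hxk⟩,
          ⟨⟨hx0, hxk⟩, Nat.gcd_dvd_left _ _⟩, ⟨hy0, hyk⟩, Nat.gcd_dvd_right _ _⟩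
    _ ≤ ∑ d ∈ Icc 2 k, #({x ∈ Ioc 0 k | d ∣ x} ×ˢ {x ∈ Ioc 0 k | d ∣ x}) := card_biUnion_le
    _ = ∑ d ∈ Icc 2 k, (k / d) ^ 2 := by
        simp only [card_product, Nat.Ioc_filter_dvd_card_eq_div, sq]

lemma sum_Icc_two_inv_sq_le (k : ℕ) : ∑ d ∈ Icc 2 k, ((d : ℝ) ^ 2)⁻¹ ≤ 11 / 12 := by
  calc ∑ d ∈ Icc 2 k, ((d : ℝ) ^ 2)⁻¹ ≤ ∑ d ∈ insert 2 (Ioo 2 (k + 1)), ((d : ℝ) ^ 2)⁻¹ := by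
        refine sum_le_sum_of_subset_of_nonneg (fun d hd => ?_) fun _ _ _ => by positivity
        simp only [mem_insert, mem_Ioo, mem_Icc] at hd ⊢
        omega
    _ = 1 / 4 + ∑ d ∈ Ioo 2 (k + 1), ((d : ℝ) ^ 2)⁻¹ := by
        rw [sum_insert (by simp)]
        norm_num
    _ ≤ 1 / 4 + 2 / (2 + 1) := by grw [sum_Ioo_inv_sq_le]; norm_num
    _ = 11 / 12 := by norm_num

lemma card_coprime_pairs_ge (k : ℕ) :
    (k : ℝ) ^ 2 / 12 ≤ #{p ∈ Ioc 0 k ×ˢ Ioc 0 k | p.1.Coprime p.2} := by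
  have hsplit := card_filter_add_card_filter_not (s := Ioc 0 k ×ˢ Ioc 0 k)
    (p := fun p : ℕ × ℕ => p.1.Coprime p.2)
  simp only [card_product, Nat.card_Ioc, Nat.sub_zero] at hsplit
  have hnot : (#{p ∈ Ioc 0 k ×ˢ Ioc 0 k | ¬ p.1.Coprime p.2} : ℝ) ≤ 11 / 12 * (k : ℝ) ^ 2 :=
    calc (#{p ∈ Ioc 0 k ×ˢ Ioc 0 k | ¬ p.1.Coprime p.2} : ℝ)
        ≤ ∑ d ∈ Icc 2 k, (((k / d : ℕ) : ℝ)) ^ 2 := by exact_mod_cast card_not_coprime_pairs_le k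
      _ ≤ ∑ d ∈ Icc 2 k, (k : ℝ) ^ 2 * ((d : ℝ) ^ 2)⁻¹ := by
          gcongr with d
          rw [← div_eq_mul_inv, ← div_pow]
          gcongr
          exact Nat.cast_div_le
      _ ≤ 11 / 12 * (k : ℝ) ^ 2 := by
          rw [← mul_sum]
          nlinarith [sum_Icc_two_inv_sq_le k, sq_nonneg (k : ℝ)]
  have hsplitR : (#{p ∈ Ioc 0 k ×ˢ Ioc 0 k | p.1.Coprime p.2} : ℝ)
      + #{p ∈ Ioc 0 k ×ˢ Ioc 0 k | ¬ p.1.Coprime p.2} = (k : ℝ) ^ 2 := by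
    exact_mod_cast hsplit.trans (sq k).symm
  linarith

def fareyPairs (k : ℕ) : Finset (ℕ × ℕ) :=
  {p ∈ Ioc 0 k ×ˢ Ioc 0 k | p.1.Coprime p.2 ∧ p.1 ≤ p.2}

lemma mem_fareyPairs {k x y : ℕ} :
    (x, y) ∈ fareyPairs k ↔ (0 < x ∧ x ≤ k) ∧ (0 < y ∧ y ≤ k) ∧ x.Coprime y ∧ x ≤ y := by
  simp [fareyPairs, and_assoc]

lemma card_fareyPairs_ge (k : ℕ) : (k : ℝ) ^ 2 / 24 ≤ #(fareyPairs k) := by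
  classical
  have hcover : {p ∈ Ioc 0 k ×ˢ Ioc 0 k | p.1.Coprime p.2} ⊆
      fareyPairs k ∪ (fareyPairs k).image Prod.swap := by
    rintro ⟨x, y⟩ hp
    simp only [fareyPairs, mem_union, mem_image, mem_filter, mem_product, Prod.exists,
      Prod.swap_prod_mk, Prod.mk.injEq] at hp ⊢
    rcases le_total x y with h | h
    · exact Or.inl ⟨hp.1, hp.2, h⟩
    · exact Or.inr ⟨y, x, ⟨⟨hp.1.2, hp.1.1⟩, hp.2.symm, h⟩, rfl, rfl⟩
  have hle : #{p ∈ Ioc 0 k ×ˢ Ioc 0 k | p.1.Coprime p.2} ≤ 2 * #(fareyPairs k) :=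
    calc _ ≤ #(fareyPairs k ∪ (fareyPairs k).image Prod.swap) := card_le_card hcover
      _ ≤ #(fareyPairs k) + #((fareyPairs k).image Prod.swap) := card_union_le _ _
      _ ≤ 2 * #(fareyPairs k) := by linarith [card_image_le (f := Prod.swap) (s := fareyPairs k)]
  have := card_coprime_pairs_ge k
  have : (#{p ∈ Ioc 0 k ×ˢ Ioc 0 k | p.1.Coprime p.2} : ℝ) ≤ 2 * #(fareyPairs k) := by
    exact_mod_cast hle
  linarith

lemma Nat.Coprime.eq_of_mul_eq_mul {a b c d : ℕ} (hab : a.Coprime b) (hcd : c.Coprime d)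
    (h : a * d = c * b) : b = d :=
  Nat.dvd_antisymm (hab.symm.dvd_of_dvd_mul_left (h ▸ Nat.dvd_mul_left b c))
    (hcd.symm.dvd_of_dvd_mul_left (h ▸ Nat.dvd_mul_left d a))

lemma eq_of_add_mul_eq_add_mul {x x' m m' y : ℕ} (hx : 0 < x) (hxy : x ≤ y) (hx' : 0 < x')
    (hxy' : x' ≤ y) (h : x + m * y = x' + m' * y) : x = x' ∧ m = m' := by
  have hm : m = m' := by
    by_contra hne
    rcases Nat.lt_or_gt_of_ne hne with hlt | hlt <;> nlinarith
  subst hm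
  exact ⟨by omega, rfl⟩

lemma inv_mul_le_abs_div_sub_div {a a' : ℤ} {b b' : ℕ} (hb : 0 < b) (hb' : 0 < b')
    (h : (a : ℝ) / b ≠ a' / b') : ((b : ℝ) * b')⁻¹ ≤ |(a : ℝ) / b - a' / b'| := by
  have hbR : (0 : ℝ) < b := by exact_mod_cast hb
  have hbR' : (0 : ℝ) < b' := by exact_mod_cast hb'
  have hdiff : (a : ℝ) / b - a' / b' = ((a * b' - a' * b : ℤ) : ℝ) / (b * b') := by
    push_cast
    field_simp
  have hnum : (a * b' - a' * b : ℤ) ≠ 0 := by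
    intro h0
    apply h
    rw [div_eq_div_iff hbR.ne' hbR'.ne']
    exact_mod_cast sub_eq_zero.1 h0
  rw [hdiff, abs_div, abs_of_pos (mul_pos hbR hbR'), inv_eq_one_div, ← Int.cast_abs]
  gcongr
  exact_mod_cast Int.one_le_abs hnum

/-- `q = ((x, y), m)` encodes the point `(m + x / y) / G`. -/
noncomputable def fareyGridPoint (G : ℕ) (q : (ℕ × ℕ) × ℕ) : ℝ :=
  ((q.1.1 + q.2 * q.1.2 : ℕ) : ℝ) / (q.1.2 * G)

lemma add_mul_le_mul_of_le_of_lt {x y m G : ℕ} (hxy : x ≤ y) (hm : m < G) :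
    x + m * y ≤ y * G := by
  nlinarith

lemma fareyGridPoint_injOn {k G : ℕ} (hG : 0 < G) :
    Set.InjOn (fareyGridPoint G) ↑(fareyPairs k ×ˢ range G) := by
  rintro ⟨⟨x, y⟩, m⟩ hq ⟨⟨x', y'⟩, m'⟩ hq' heq
  simp only [coe_product, Set.mem_prod, mem_coe, mem_fareyPairs, mem_range] at hq hq'
  obtain ⟨⟨⟨hx, -⟩, ⟨hy, -⟩, hcop, hxy⟩, -⟩ := hq
  obtain ⟨⟨⟨hx', -⟩, ⟨hy', -⟩, hcop', hxy'⟩, -⟩ := hq'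
  have hcross : (x + m * y) * y' = (x' + m' * y') * y := by
    simp only [fareyGridPoint] at heq
    rw [div_eq_div_iff (by positivity) (by positivity)] at heq
    have : (((x + m * y) * y' * G : ℕ) : ℝ) = (((x' + m' * y') * y * G : ℕ) : ℝ) := by
      push_cast at heq ⊢
      linear_combination heq
    exact Nat.eq_of_mul_eq_mul_right hG (by exact_mod_cast this)
  have hyy : y = y' := ((Nat.coprime_add_mul_right_left x y m).2 hcop).eq_of_mul_eq_mul
    ((Nat.coprime_add_mul_right_left x' y' m').2 hcop') hcross
  subst hyy
  obtain ⟨rfl, rfl⟩ := eq_of_add_mul_eq_add_mul hx hxy hx' hxy'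
    (Nat.eq_of_mul_eq_mul_right hy hcross)
  rfl

noncomputable def fareyGrid (k G : ℕ) : Finset ℝ :=
  (fareyPairs k ×ˢ range G).image (fareyGridPoint G)

lemma card_fareyGrid {k G : ℕ} (hG : 0 < G) : #(fareyGrid k G) = #(fareyPairs k) * G := by
  rw [fareyGrid, card_image_of_injOn (fareyGridPoint_injOn hG), card_product, card_range]

lemma inv_le_abs_sub_of_mem_fareyGrid {k G : ℕ} (hG : 0 < G) {p p' : ℝ}
    (hp : p ∈ fareyGrid k G) (hp' : p' ∈ fareyGrid k G) (hne : p ≠ p') :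
    ((k : ℝ) ^ 2 * G)⁻¹ ≤ |p - p'| := by
  obtain ⟨⟨⟨x, y⟩, m⟩, hq, rfl⟩ := mem_image.1 hp
  obtain ⟨⟨⟨x', y'⟩, m'⟩, hq', rfl⟩ := mem_image.1 hp'
  simp only [mem_product, mem_fareyPairs, mem_range] at hq hq'
  obtain ⟨⟨-, ⟨hy, hyk⟩, -⟩, -⟩ := hq
  obtain ⟨⟨-, ⟨hy', hyk'⟩, -⟩, -⟩ := hq'
  have hGR : (0 : ℝ) < G := by exact_mod_cast hG
  have hpoint : ∀ x y m : ℕ,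
      fareyGridPoint G ((x, y), m) = (((x + m * y : ℕ) : ℤ) : ℝ) / (y : ℝ) / G := by
    intro x y m
    simp only [fareyGridPoint, Int.cast_natCast, div_div]
  rw [hpoint, hpoint] at hne
  rw [hpoint, hpoint, ← sub_div, abs_div, abs_of_pos hGR]
  have hsep := inv_mul_le_abs_div_sub_div hy hy' fun h => hne (by rw [h])
  calc ((k : ℝ) ^ 2 * G)⁻¹ ≤ ((y : ℝ) * y')⁻¹ / G := by
        rw [div_eq_mul_inv, ← mul_inv, sq]
        gcongr
    _ ≤ _ := by gcongr

/-- `(A − A) / ((B − B) \ {0})` for `A = {0, …, n}` and `B = {b₀ + i g : i ≤ k}`. -/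
def diffQuotientSet (n k : ℕ) (b₀ g : ℤ) : Set ℝ :=
  {x : ℝ | ∃ a b : ℤ,
    (∃ a₁ a₂ : ℤ, 0 ≤ a₁ ∧ a₁ ≤ (n:ℤ) ∧ 0 ≤ a₂ ∧ a₂ ≤ (n:ℤ) ∧ a = a₁ - a₂) ∧
    (∃ i j : ℕ, i ≤ k ∧ j ≤ k ∧ b = (b₀ + (i:ℤ) * g) - (b₀ + (j:ℤ) * g)) ∧
    b ≠ 0 ∧ x = (a:ℝ) / (b:ℝ)}

lemma coe_fareyGrid_subset {n k G : ℕ} (b₀ : ℤ) (hG : 0 < G) (hkG : k * G ≤ n) :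
    ↑(fareyGrid k G) ⊆ Set.Icc 0 1 ∩ diffQuotientSet n k b₀ G := by
  rw [fareyGrid, coe_image, Set.image_subset_iff]
  rintro ⟨⟨x, y⟩, m⟩ hq
  simp only [coe_product, Set.mem_prod, mem_coe, mem_fareyPairs, mem_range] at hq
  obtain ⟨⟨-, ⟨hy, hyk⟩, -, hxy⟩, hm⟩ := hq
  simp only [Set.mem_preimage]
  have hnum := add_mul_le_mul_of_le_of_lt hxy hm
  have hden : (0 : ℝ) < y * G := by positivity
  refine ⟨⟨by unfold fareyGridPoint; positivity, ?_⟩, x + m * y, y * G, ?_, ?_, by positivity, ?_⟩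
  · rw [fareyGridPoint, div_le_one hden]
    exact_mod_cast hnum
  · refine ⟨x + m * y, 0, by positivity, ?_, le_rfl, by positivity, by ring⟩
    exact_mod_cast hnum.trans ((Nat.mul_le_mul_right G hyk).trans hkG)
  · exact ⟨y, 0, hyk, Nat.zero_le k, by ring⟩
  · simp [fareyGridPoint]

/-- Let `A = {0,…,n}` and let `B ⊆ {0,…,n}` be an arithmetic progression
`B = {b₀, b₀+g, …, b₀+k·g}` with gap `g > 0` and diameter `D = k·g > 0` (so `|B| = k+1`).
Then the `(|B|·D)⁻¹`-covering number of `[0,1] ∩ (A−A)/((B−B)\{0})` is at least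
`c·|B|·D` for an absolute constant `c > 0`. -/
theorem stmt2 :
    ∃ c : ℝ, 0 < c ∧ ∀ (n k : ℕ) (b₀ g : ℤ), 0 < g → 0 < k →
      (∀ i : ℕ, i ≤ k → 0 ≤ b₀ + (i:ℤ) * g ∧ b₀ + (i:ℤ) * g ≤ (n:ℤ)) →
      ∀ D : ℝ, D = (k : ℝ) * (g : ℝ) →
      c * ((k + 1 : ℝ) * D) ≤
        (covN ((k + 1 : ℝ) * D)⁻¹
          (Set.Icc (0:ℝ) 1 ∩
            {x : ℝ | ∃ a b : ℤ,
              (∃ a₁ a₂ : ℤ, 0 ≤ a₁ ∧ a₁ ≤ (n:ℤ) ∧ 0 ≤ a₂ ∧ a₂ ≤ (n:ℤ) ∧ a = a₁ - a₂) ∧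
              (∃ i j : ℕ, i ≤ k ∧ j ≤ k ∧ b = (b₀ + (i:ℤ) * g) - (b₀ + (j:ℤ) * g)) ∧
              b ≠ 0 ∧ x = (a:ℝ) / (b:ℝ)}) : ℝ) := by
  refine ⟨1 / 48, by norm_num, fun n k b₀ g hg hk hB D hD => ?_⟩
  lift g to ℕ using hg.le with G
  change _ ≤ (covN _ (Set.Icc 0 1 ∩ diffQuotientSet n k b₀ G) : ℝ)
  have hG : 0 < G := by exact_mod_cast hg
  rw [Int.cast_natCast] at hD
  have hkG : k * G ≤ n := by
    have h₀ := (hB 0 k.zero_le).1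
    have hₖ := (hB k le_rfl).2
    push_cast at h₀
    exact_mod_cast (by push_cast; linarith : ((k * G : ℕ) : ℤ) ≤ n)
  have hkR : (1 : ℝ) ≤ k := by exact_mod_cast hk
  have hcard : #(fareyGrid k G) ≤ covN ((k + 1 : ℝ) * D)⁻¹
      (Set.Icc 0 1 ∩ diffQuotientSet n k b₀ G) := by
    refine card_le_covN (by rw [hD]; positivity)
      (Metric.isBounded_Icc (0 : ℝ) 1 |>.subset Set.inter_subset_left)
      (coe_fareyGrid_subset b₀ hG hkG) fun p hp p' hp' hne => ?_
    refine lt_of_lt_of_le ?_ (inv_le_abs_sub_of_mem_fareyGrid hG hp hp' hne)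
    rw [hD]
    have hkG_pos : (0 : ℝ) < k * G := mul_pos (by linarith) (by exact_mod_cast hG)
    exact inv_strictAnti₀ (by positivity) (by nlinarith)
  calc 1 / 48 * ((k + 1 : ℝ) * D) ≤ 1 / 48 * ((2 * k) * (k * G)) := by
        rw [hD]
        gcongr
        linarith
    _ = (k : ℝ) ^ 2 / 24 * G := by ring
    _ ≤ #(fareyPairs k) * G := by gcongr; exact card_fareyPairs_ge k
    _ = #(fareyGrid k G) := by rw [card_fareyGrid hG]; push_cast; ring
    _ ≤ _ := by exact_mod_cast hcard
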